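/- The function y(z) = (1 − π√z·cot(π√z)) / (2z) satisfies the differential equation 2z·y''(z) + 5y'(z) − 4z·y(z)·y'(z) − 2·y(z)² = 0 on any domain where it is defined (e.g. 0 < z < 1 real). -/

import Mathlib

open Real

/-- `y(z) = (1 - π √z cot(π √z)) / (2 z)`. -/
noncomputable def zetaGF (z : ℝ) : ℝ :=
  (1 - π * Real.sqrt z * (Real.cos (π * Real.sqrt z) / Real.sin (π * Real.sqrt z))) / (2 * z)

noncomputable def zetaGF1 (z : ℝ) : ℝ :=
  (π ^ 2 * z / Real.sin (π * Real.sqrt z) ^ 2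
    + π * Real.sqrt z * (Real.cos (π * Real.sqrt z) / Real.sin (π * Real.sqrt z)) - 2) / (4 * z ^ 2)

noncomputable def zetaGF2 (z : ℝ) : ℝ :=
  (8 - 3 * (π * Real.sqrt z * (Real.cos (π * Real.sqrt z) / Real.sin (π * Real.sqrt z)))
     - 3 * (π ^ 2 * z / Real.sin (π * Real.sqrt z) ^ 2)
     - 2 * (π * Real.sqrt z * (Real.cos (π * Real.sqrt z) / Real.sin (π * Real.sqrt z)))
         * (π ^ 2 * z / Real.sin (π * Real.sqrt z) ^ 2)) / (8 * z ^ 3)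

lemma aux_basic {z : ℝ} (hz : z ∈ Set.Ioo (0:ℝ) 1) :
    0 < Real.sqrt z ∧ Real.sqrt z < 1 ∧ 0 < Real.sin (π * Real.sqrt z) := by
  obtain ⟨h0, h1⟩ := hz
  have hs0 : 0 < Real.sqrt z := Real.sqrt_pos.mpr h0
  have hs1 : Real.sqrt z < 1 := (Real.sqrt_lt' one_pos).mpr (by linarith)
  refine ⟨hs0, hs1, Real.sin_pos_of_pos_of_lt_pi (by positivity) ?_⟩
  nlinarith [Real.pi_pos]

lemma hasDerivAt_cot_comp {z : ℝ} (hz : z ∈ Set.Ioo (0:ℝ) 1) :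
    HasDerivAt (fun z => Real.cos (π * Real.sqrt z) / Real.sin (π * Real.sqrt z))
      (-(π * (1 / (2 * Real.sqrt z))) / Real.sin (π * Real.sqrt z) ^ 2) z := by
  obtain ⟨hs0, hs1, hS⟩ := aux_basic hz
  have hSne : Real.sin (π * Real.sqrt z) ≠ 0 := hS.ne'
  have hsq : HasDerivAt Real.sqrt (1 / (2 * Real.sqrt z)) z := Real.hasDerivAt_sqrt hz.1.ne'
  have hA : HasDerivAt (fun z => π * Real.sqrt z) (π * (1 / (2 * Real.sqrt z))) z :=
    hsq.const_mul π
  have hC : HasDerivAt (fun z => Real.cos (π * Real.sqrt z))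
      (-Real.sin (π * Real.sqrt z) * (π * (1 / (2 * Real.sqrt z)))) z :=
    (Real.hasDerivAt_cos _).comp z hA
  have hSd : HasDerivAt (fun z => Real.sin (π * Real.sqrt z))
      (Real.cos (π * Real.sqrt z) * (π * (1 / (2 * Real.sqrt z)))) z :=
    (Real.hasDerivAt_sin _).comp z hA
  have h := hC.div hSd hSne
  refine h.congr_deriv ?_
  have hpy := Real.sin_sq_add_cos_sq (π * Real.sqrt z)
  field_simp
  linear_combination (-1) * hpy

lemma hasDerivAt_zetaGF {z : ℝ} (hz : z ∈ Set.Ioo (0:ℝ) 1) :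
    HasDerivAt zetaGF (zetaGF1 z) z := by
  obtain ⟨hs0, hs1, hS⟩ := aux_basic hz
  have h0 := hz.1
  have hzne : z ≠ 0 := h0.ne'
  have hSne : Real.sin (π * Real.sqrt z) ≠ 0 := hS.ne'
  have hsne : Real.sqrt z ≠ 0 := hs0.ne'
  have hsq : HasDerivAt Real.sqrt (1 / (2 * Real.sqrt z)) z := Real.hasDerivAt_sqrt hzne
  have hA : HasDerivAt (fun z => π * Real.sqrt z) (π * (1 / (2 * Real.sqrt z))) z :=
    hsq.const_mul π
  have hfrac := hasDerivAt_cot_comp hz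
  have hnum := (hasDerivAt_const z (1:ℝ)).sub (hA.mul hfrac)
  have hden : HasDerivAt (fun z : ℝ => 2 * z) 2 z := by
    simpa using (hasDerivAt_id z).const_mul (2:ℝ)
  have h := hnum.div hden (by positivity)
  refine (h.congr_deriv ?_).congr_deriv rfl
  symm
  simp only [Pi.sub_apply, Pi.add_apply, Pi.mul_apply, Pi.div_apply]
  unfold zetaGF1
  set s := Real.sqrt z with hs
  have hss : s * s = z := Real.mul_self_sqrt h0.le
  rw [← hss]
  field_simp
  ring

lemma hasDerivAt_zetaGF1 {z : ℝ} (hz : z ∈ Set.Ioo (0:ℝ) 1) :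
    HasDerivAt zetaGF1 (zetaGF2 z) z := by
  obtain ⟨hs0, hs1, hS⟩ := aux_basic hz
  have h0 := hz.1
  have hzne : z ≠ 0 := h0.ne'
  have hSne : Real.sin (π * Real.sqrt z) ≠ 0 := hS.ne'
  have hsne : Real.sqrt z ≠ 0 := hs0.ne'
  have hsq : HasDerivAt Real.sqrt (1 / (2 * Real.sqrt z)) z := Real.hasDerivAt_sqrt hzne
  have hA : HasDerivAt (fun z => π * Real.sqrt z) (π * (1 / (2 * Real.sqrt z))) z :=
    hsq.const_mul π
  have hSd : HasDerivAt (fun z => Real.sin (π * Real.sqrt z))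
      (Real.cos (π * Real.sqrt z) * (π * (1 / (2 * Real.sqrt z)))) z :=
    (Real.hasDerivAt_sin _).comp z hA
  have hS2 : HasDerivAt (fun z => Real.sin (π * Real.sqrt z) ^ 2)
      (2 * Real.sin (π * Real.sqrt z) ^ 1 *
        (Real.cos (π * Real.sqrt z) * (π * (1 / (2 * Real.sqrt z))))) z :=
    hSd.pow 2
  have hS2ne : Real.sin (π * Real.sqrt z) ^ 2 ≠ 0 := pow_ne_zero _ hSne
  have hz2 : HasDerivAt (fun z : ℝ => π ^ 2 * z) (π ^ 2) z := by
    simpa using (hasDerivAt_id z).const_mul (π ^ 2 : ℝ)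
  have hterm1 := hz2.div hS2 hS2ne
  have hfrac := hasDerivAt_cot_comp hz
  have hterm2 := hA.mul hfrac
  have hnum := (hterm1.add hterm2).sub (hasDerivAt_const z (2:ℝ))
  have hden : HasDerivAt (fun z : ℝ => 4 * z ^ 2) (4 * (2 * z ^ 1)) z :=
    (hasDerivAt_pow 2 z).const_mul 4
  have h := hnum.div hden (by positivity)
  refine (h.congr_deriv ?_).congr_deriv rfl
  symm
  simp only [Pi.sub_apply, Pi.add_apply, Pi.mul_apply, Pi.div_apply]
  unfold zetaGF2
  set s := Real.sqrt z with hs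
  have hss : s * s = z := Real.mul_self_sqrt h0.le
  rw [← hss]
  field_simp
  ring

theorem zetaGF_quadratic_ODE :
    ∀ z ∈ Set.Ioo (0 : ℝ) 1,
      2 * z * deriv (deriv zetaGF) z + 5 * deriv zetaGF z -
        4 * z * zetaGF z * deriv zetaGF z - 2 * (zetaGF z) ^ 2 = 0 := by
  intro z hz
  have hEq : Set.EqOn (deriv zetaGF) zetaGF1 (Set.Ioo (0:ℝ) 1) := fun w hw =>
    (hasDerivAt_zetaGF hw).deriv
  have h1 : deriv zetaGF z = zetaGF1 z := hEq hz
  have h2 : deriv (deriv zetaGF) z = zetaGF2 z := by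
    have heq : deriv (deriv zetaGF) z = deriv zetaGF1 z :=
      Filter.EventuallyEq.deriv_eq
        (Filter.eventuallyEq_of_mem (isOpen_Ioo.mem_nhds hz) hEq)
    rw [heq, (hasDerivAt_zetaGF1 hz).deriv]
  rw [h1, h2]
  obtain ⟨hs0, hs1, hS⟩ := aux_basic hz
  have hzne : z ≠ 0 := hz.1.ne'
  have hSne : Real.sin (π * Real.sqrt z) ≠ 0 := hS.ne'
  unfold zetaGF zetaGF1 zetaGF2
  field_simp
  ring
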